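/- arXiv:1703.08495 — 3 statements merged into one kernel-verified Lean document; each statement's English description precedes it below -/
import Mathlib

section
/- Let (x, h, y) be an sl₂-triple acting on a finite-dimensional representation E, where y acts nilpotently. For each integer k, define F_k to be the sum of the eigenspaces of h with eigenvalue ≤ k. Then F_k = ∑_{ℓ ≥ 0, k+ℓ+1 ≥ 0} (Ker y^{k+ℓ+1} ∩ Im y^ℓ). In particular, the filtration (F_k) depends only on the nilpotent element y and not on the choice of h completing y to an sl₂-triple. -/
/-!
Everything rests on the injectivity of `Y ^ p` on the weight space `E_c` when `p ≤ c`. It is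
proved by descending induction on `c` from `X Y^(p+1) = Y^(p+1) X + (p+1)(c-p) Y^p` on `E_c`:
`X v` has weight `c + 2` and is killed by `Y^(p+1)`, so `X v = 0`, and then the formula peels
off one power of `Y` at a time. Applied to the triple `(Y, -H, X)` it makes `X ^ m` injective on
`E_{-m}`, so `Y ^ m : E_m → E_{-m}` is bijective by counting dimensions.

Since `ker Y^p` then only has weights `< p`, and `Y^ℓ` lowers weights by `2ℓ`,
`ker Y^(k+ℓ+1) ∩ im Y^ℓ = Y^ℓ (ker Y^(k+2ℓ+1))` has weights `≤ k`. Conversely,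
surjectivity splits a vector `v` of weight `j` as `u + Y w` with `w` of weight `j + 2` and
`Y^(max (j+1) 0) u = 0`; descending induction on `j` finishes.
-/

/-- The filtration of a module by sums of eigenspaces of `H` with eigenvalue `≤ k`. -/
noncomputable def Ffil {E : Type*} [AddCommGroup E] [Module ℂ E]
    (H : Module.End ℂ E) (k : ℤ) : Submodule ℂ E :=
  ⨆ (j : ℤ) (_ : j ≤ k), Module.End.eigenspace H (j : ℂ)

open Module LinearMap

theorem Int.strong_induction_down {P : ℤ → Prop} (T : ℤ) (base : ∀ c, T < c → P c)
    (step : ∀ c, (∀ d, c < d → P d) → P c) (c : ℤ) : P c := by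
  obtain ⟨n, hn⟩ : ∃ n : ℕ, T < c + n := ⟨(T - c).toNat + 1, by omega⟩
  induction n generalizing c with
  | zero => exact base c (by simpa using hn)
  | succ n ih => exact step c fun d hd => ih d (by omega)

theorem LinearMap.ker_pow_inf_range_pow {R M : Type*} [CommRing R] [AddCommGroup M] [Module R M]
    (f : Module.End R M) (n ℓ : ℕ) :
    ker (f ^ n) ⊓ range (f ^ ℓ) = (ker (f ^ (n + ℓ))).map (f ^ ℓ) := by
  rw [inf_comm, ← Submodule.map_comap_eq, ← LinearMap.ker_comp, pow_add, Module.End.mul_eq_comp]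

section WeightShift

variable {R M : Type*} [CommRing R] [AddCommGroup M] [Module R M] {H A : Module.End R M} {a : R}

lemma apply_pow_apply_of_lie_eq_smul (hA : ⁅H, A⁆ = a • A) (n : ℕ) (v : M) :
    H ((A ^ n) v) = (A ^ n) (H v) + (n * a) • (A ^ n) v := by
  have hHA : ∀ w, H (A w) = A (H w) + a • A w := fun w => by
    have := LinearMap.congr_fun hA w
    simp only [Ring.lie_def, LinearMap.sub_apply, Module.End.mul_apply,
      LinearMap.smul_apply] at this
    rw [← this]
    abel
  induction n generalizing v with
  | zero => simp
  | succ n ih =>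
    simp only [pow_succ, Module.End.mul_apply, ih, hHA, map_add, map_smul]
    push_cast
    module

lemma pow_apply_mem_eigenspace (hA : ⁅H, A⁆ = a • A) (n : ℕ) {μ : R} {v : M}
    (hv : v ∈ H.eigenspace μ) : (A ^ n) v ∈ H.eigenspace (μ + n * a) := by
  rw [Module.End.mem_eigenspace_iff] at hv ⊢
  rw [apply_pow_apply_of_lie_eq_smul hA, hv, map_smul, add_smul]

lemma apply_mem_ker_pow_of_lie_eq_smul (hA : ⁅H, A⁆ = a • A) (n : ℕ) :
    ∀ v ∈ ker (A ^ n), H v ∈ ker (A ^ n) := by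
  intro v hv
  rw [mem_ker] at hv ⊢
  have := apply_pow_apply_of_lie_eq_smul hA n v
  rwa [hv, map_zero, smul_zero, add_zero, eq_comm] at this

end WeightShift

lemma Module.End.exists_eigenspace_intCast_eq_bot {K E : Type*} [Field K] [CharZero K]
    [AddCommGroup E] [Module K E] [FiniteDimensional K E] (H : Module.End K E) :
    ∃ T : ℤ, ∀ c : ℤ, T < c → H.eigenspace (c : K) = ⊥ := by
  obtain ⟨T, hT⟩ :=
    ((Module.End.finite_hasEigenvalue H).preimage Int.cast_injective.injOn).bddAbove
  exact ⟨T, fun c hc => not_not.mp fun hne => (hT hne).not_gt hc⟩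

lemma Module.End.eigenspace_eq_bot_of_ne_intCast {K E : Type*} [Field K]
    [AddCommGroup E] [Module K E] {H : Module.End K E}
    (hsemi : (⨆ c : ℤ, H.eigenspace (c : K)) = ⊤) {μ : K} (hμ : ∀ c : ℤ, (c : K) ≠ μ) :
    H.eigenspace μ = ⊥ := by
  have hrest : ⨆ (ν : K) (_ : ν ≠ μ), H.eigenspace ν = ⊤ :=
    top_le_iff.mp (hsemi ▸ iSup_le fun c => le_iSup₂_of_le (c : K) (hμ c) le_rfl)
  simpa [hrest] using H.eigenspaces_iSupIndep μ

lemma eigenspace_le_Ffil {E : Type*} [AddCommGroup E] [Module ℂ E] {H : Module.End ℂ E}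
    {j k : ℤ} (hjk : j ≤ k) : H.eigenspace (j : ℂ) ≤ Ffil H k :=
  le_iSup₂_of_le j hjk le_rfl

section KerRangeFiltration

variable {R M : Type*} [CommRing R] [AddCommGroup M] [Module R M] {Y : Module.End R M}

noncomputable def kerRangeFiltration (Y : Module.End R M) (k : ℤ) : Submodule R M :=
  ⨆ (ℓ : ℕ) (_ : 0 ≤ k + (ℓ : ℤ) + 1),
    (LinearMap.ker (Y ^ (k + (ℓ : ℤ) + 1).toNat) ⊓ LinearMap.range (Y ^ ℓ))

lemma ker_pow_inf_range_pow_le_kerRangeFiltration {k : ℤ} {n ℓ : ℕ}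
    (hn : (n : ℤ) = k + ℓ + 1) :
    ker (Y ^ n) ⊓ range (Y ^ ℓ) ≤ kerRangeFiltration Y k :=
  le_iSup₂_of_le ℓ (by omega) (by rw [← hn, Int.toNat_natCast])

lemma ker_pow_le_kerRangeFiltration (k : ℤ) :
    ker (Y ^ (k + 1).toNat) ≤ kerRangeFiltration Y k := by
  by_cases hk : 0 ≤ k + 1
  · simpa [Module.End.one_eq_id] using
      ker_pow_inf_range_pow_le_kerRangeFiltration (Y := Y) (n := (k + 1).toNat) (ℓ := 0)
        (by omega)
  · simp [Int.toNat_of_nonpos (not_le.mp hk).le, Module.End.one_eq_id]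

lemma kerRangeFiltration_le_comap (k : ℤ) :
    kerRangeFiltration Y (k + 2) ≤ (kerRangeFiltration Y k).comap Y := by
  refine iSup₂_le fun ℓ hℓ => ?_
  obtain ⟨n, hn⟩ : ∃ n : ℕ, (n : ℤ) = k + 2 + ℓ + 1 := ⟨_, Int.toNat_of_nonneg hℓ⟩
  rw [← hn, Int.toNat_natCast]
  rcases n with _ | n
  · simp [Module.End.one_eq_id]
  · rintro u ⟨hu, z, rfl⟩
    refine ker_pow_inf_range_pow_le_kerRangeFiltration (n := n) (ℓ := ℓ + 1) (by omega)
      ⟨?_, z, ?_⟩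
    · rw [SetLike.mem_coe, mem_ker] at hu ⊢
      rwa [← Module.End.mul_apply, ← pow_succ]
    · rw [pow_succ', Module.End.mul_apply]

end KerRangeFiltration

/-- Unlike Mathlib's `IsSl2Triple`, this allows `H = 0`, as on the zero module. -/
structure IsSl2TripleEnd {R M : Type*} [CommRing R] [AddCommGroup M] [Module R M]
    (X H Y : Module.End R M) : Prop where
  lie_h_x : ⁅H, X⁆ = (2 : R) • X
  lie_h_y : ⁅H, Y⁆ = (-2 : R) • Y
  lie_x_y : ⁅X, Y⁆ = H

namespace IsSl2TripleEnd

section CommRing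

variable {R M : Type*} [CommRing R] [AddCommGroup M] [Module R M] {X H Y : Module.End R M}
  (h : IsSl2TripleEnd X H Y)
include h

lemma symm : IsSl2TripleEnd Y (-H) X where
  lie_h_x := by
    rw [Ring.lie_def, neg_mul, mul_neg, neg_sub_neg, ← neg_sub, ← Ring.lie_def, h.lie_h_y,
      neg_smul, neg_neg]
  lie_h_y := by
    rw [Ring.lie_def, neg_mul, mul_neg, neg_sub_neg, ← neg_sub, ← Ring.lie_def, h.lie_h_x,
      neg_smul]
  lie_x_y := by rw [Ring.lie_def, ← neg_sub, ← Ring.lie_def, h.lie_x_y]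

lemma y_pow_apply_mem (n : ℕ) {c : ℤ} {v : M} (hv : v ∈ H.eigenspace (c : R)) :
    (Y ^ n) v ∈ H.eigenspace ((c - 2 * n : ℤ) : R) := by
  convert pow_apply_mem_eigenspace h.lie_h_y n hv using 2
  push_cast
  ring

lemma x_pow_apply_mem (n : ℕ) {c : ℤ} {v : M} (hv : v ∈ H.eigenspace (c : R)) :
    (X ^ n) v ∈ H.eigenspace ((c + 2 * n : ℤ) : R) := by
  convert pow_apply_mem_eigenspace h.lie_h_x n hv using 2
  push_cast
  ring

lemma x_apply_y_pow_succ_apply (n : ℕ) {μ : R} {v : M} (hv : v ∈ H.eigenspace μ) :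
    X ((Y ^ (n + 1)) v) = (Y ^ (n + 1)) (X v) + (((n : R) + 1) * (μ - n)) • (Y ^ n) v := by
  have hXY : ∀ w, X (Y w) = Y (X w) + H w := fun w => by
    rw [← h.lie_x_y, Ring.lie_def]
    simp only [LinearMap.sub_apply, Module.End.mul_apply]
    abel
  induction n generalizing μ v with
  | zero => simp [hXY, Module.End.mem_eigenspace_iff.mp hv]
  | succ n ih =>
    have hYv : Y v ∈ H.eigenspace (μ - 2) := by
      simpa [sub_eq_add_neg] using pow_apply_mem_eigenspace h.lie_h_y 1 hv
    rw [pow_succ, Module.End.mul_apply, ih hYv, hXY, Module.End.mem_eigenspace_iff.mp hv]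
    simp only [map_add, map_smul, pow_succ, Module.End.mul_apply]
    push_cast
    module

end CommRing

section Field

variable {K E : Type*} [Field K] [CharZero K] [AddCommGroup E] [Module K E]
  {X H Y : Module.End K E} (h : IsSl2TripleEnd X H Y)
include h

lemma eq_zero_of_y_pow_apply_eq_zero_of_x_apply_eq_zero {c : ℤ} {v : E}
    (hv : v ∈ H.eigenspace (c : K)) (hXv : X v = 0) (p : ℕ) (hpc : (p : ℤ) ≤ c)
    (hYv : (Y ^ p) v = 0) : v = 0 := by
  induction p with
  | zero => simpa using hYv
  | succ p ih =>
    refine ih (by omega) ?_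
    have hcoef : ((p : K) + 1) * ((c : K) - p) ≠ 0 := by
      have : ((p + 1) * (c - p) : ℤ) ≠ 0 := mul_ne_zero (by omega) (by omega)
      exact_mod_cast this
    have := h.x_apply_y_pow_succ_apply p hv
    rw [hYv, hXv, map_zero, map_zero, zero_add] at this
    exact (smul_eq_zero.mp this.symm).resolve_left hcoef

variable [FiniteDimensional K E]

lemma eq_zero_of_y_pow_apply_eq_zero {c : ℤ} {v : E} (hv : v ∈ H.eigenspace (c : K)) (p : ℕ)
    (hpc : (p : ℤ) ≤ c) (hYv : (Y ^ p) v = 0) : v = 0 := by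
  obtain ⟨T, hT⟩ := H.exists_eigenspace_intCast_eq_bot
  induction c using Int.strong_induction_down T generalizing p v with
  | base c hc => rw [hT c hc] at hv; exact (Submodule.mem_bot K).mp hv
  | step c ih =>
    have hXv : X v = 0 := by
      refine ih (c + 2) (by omega) (by simpa using h.x_pow_apply_mem 1 hv) (p + 1) (by omega) ?_
      have hYv' : (Y ^ (p + 1)) v = 0 := by rw [pow_succ', Module.End.mul_apply, hYv, map_zero]
      have := h.x_apply_y_pow_succ_apply p hv
      rwa [hYv', hYv, map_zero, smul_zero, add_zero, eq_comm] at this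
    exact h.eq_zero_of_y_pow_apply_eq_zero_of_x_apply_eq_zero hv hXv p hpc hYv

lemma eq_zero_of_x_pow_apply_eq_zero {c : ℤ} {v : E} (hv : v ∈ H.eigenspace (c : K)) (p : ℕ)
    (hpc : (p : ℤ) ≤ -c) (hXv : (X ^ p) v = 0) : v = 0 :=
  h.symm.eq_zero_of_y_pow_apply_eq_zero (c := -c)
    (by simpa [Module.End.mem_eigenspace_iff] using hv) p hpc hXv

lemma exists_y_pow_apply_eq (m : ℕ) {v : E} (hv : v ∈ H.eigenspace ((-m : ℤ) : K)) :
    ∃ w ∈ H.eigenspace ((m : ℤ) : K), (Y ^ m) w = v := by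
  let f : H.eigenspace ((m : ℤ) : K) →ₗ[K] H.eigenspace ((-m : ℤ) : K) :=
    (Y ^ m).restrict fun w hw => by convert h.y_pow_apply_mem m hw using 3; ring
  let g : H.eigenspace ((-m : ℤ) : K) →ₗ[K] H.eigenspace ((m : ℤ) : K) :=
    (X ^ m).restrict fun w hw => by convert h.x_pow_apply_mem m hw using 3; ring
  have hf : Function.Injective f := (injective_iff_map_eq_zero f).mpr fun w hw =>
    Subtype.ext (h.eq_zero_of_y_pow_apply_eq_zero w.2 m le_rfl (congrArg Subtype.val hw))
  have hg : Function.Injective g := (injective_iff_map_eq_zero g).mpr fun w hw =>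
    Subtype.ext (h.eq_zero_of_x_pow_apply_eq_zero w.2 m (by omega) (congrArg Subtype.val hw))
  have hdim := le_antisymm (finrank_le_finrank_of_injective hf) (finrank_le_finrank_of_injective hg)
  obtain ⟨w, hw⟩ := (injective_iff_surjective_of_finrank_eq_finrank hdim).mp hf ⟨v, hv⟩
  exact ⟨w, w.2, congrArg Subtype.val hw⟩

lemma exists_y_pow_apply_eq_of_add_le {c : ℤ} {s : ℕ} (hcs : c + s ≤ 0) {v : E}
    (hv : v ∈ H.eigenspace (c : K)) :
    ∃ w ∈ H.eigenspace ((c + 2 * s : ℤ) : K), (Y ^ s) w = v := by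
  obtain ⟨m, rfl⟩ : ∃ m : ℕ, c = -m := ⟨(-c).toNat, by omega⟩
  obtain ⟨w, hw, rfl⟩ := h.exists_y_pow_apply_eq m hv
  have hsm : s ≤ m := by omega
  refine ⟨(Y ^ (m - s)) w, ?_, ?_⟩
  · convert h.y_pow_apply_mem (m - s) hw using 3
    push_cast [hsm]
    ring
  · rw [← Module.End.mul_apply, ← pow_add, Nat.add_sub_cancel' hsm]

lemma eigenspace_le_kerRangeFiltration_of_add_two {j k : ℤ} (hjk : j ≤ k)
    (hnext : H.eigenspace ((j + 2 : ℤ) : K) ≤ kerRangeFiltration Y (k + 2)) :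
    H.eigenspace (j : K) ≤ kerRangeFiltration Y k := by
  intro v hv
  set n := (j + 1).toNat
  obtain ⟨w, hw, hwv⟩ :=
    h.exists_y_pow_apply_eq_of_add_le (s := n + 1) (by omega) (h.y_pow_apply_mem n hv)
  have hu : v - Y w ∈ ker (Y ^ (k + 1).toNat) := by
    obtain ⟨d, hd⟩ : ∃ d, (k + 1).toNat = d + n := ⟨(k + 1).toNat - n, by omega⟩
    rw [mem_ker, hd, pow_add, Module.End.mul_apply, map_sub, ← Module.End.mul_apply (Y ^ n) Y,
      ← pow_succ, hwv, sub_self, map_zero]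
  rw [← sub_add_cancel v (Y w)]
  refine add_mem (ker_pow_le_kerRangeFiltration k hu) (kerRangeFiltration_le_comap k (hnext ?_))
  convert hw using 3
  omega

lemma eigenspace_le_kerRangeFiltration {j k : ℤ} (hjk : j ≤ k) :
    H.eigenspace (j : K) ≤ kerRangeFiltration Y k := by
  obtain ⟨T, hT⟩ := H.exists_eigenspace_intCast_eq_bot
  induction j using Int.strong_induction_down T generalizing k with
  | base j hj => simp [hT j hj]
  | step j ih =>
    exact h.eigenspace_le_kerRangeFiltration_of_add_two hjk (ih (j + 2) (by omega) (by omega))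

end Field

section Complex

variable {E : Type*} [AddCommGroup E] [Module ℂ E]
  {X H Y : Module.End ℂ E} (h : IsSl2TripleEnd X H Y)
include h

lemma map_y_pow_Ffil_le (ℓ : ℕ) (k : ℤ) :
    (Ffil H k).map (Y ^ ℓ) ≤ Ffil H (k - 2 * ℓ) := by
  refine Submodule.map_le_iff_le_comap.mpr (iSup₂_le fun j hj v hv => ?_)
  exact eigenspace_le_Ffil (by omega) (h.y_pow_apply_mem ℓ hv)

variable [FiniteDimensional ℂ E]

lemma Ffil_le_kerRangeFiltration (k : ℤ) : Ffil H k ≤ kerRangeFiltration Y k :=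
  iSup₂_le fun _ hjk => h.eigenspace_le_kerRangeFiltration hjk

lemma ker_y_pow_le_Ffil (hsemi : (⨆ c : ℤ, H.eigenspace (c : ℂ)) = ⊤) (p : ℕ) :
    ker (Y ^ p) ≤ Ffil H (p - 1) := by
  have htop : ⨆ μ : ℂ, H.eigenspace μ = ⊤ :=
    top_le_iff.mp (hsemi ▸ iSup_le fun c => le_iSup H.eigenspace (c : ℂ))
  calc ker (Y ^ p) = ker (Y ^ p) ⊓ ⨆ μ : ℂ, H.eigenspace μ := by rw [htop, inf_top_eq]
    _ = ⨆ μ : ℂ, ker (Y ^ p) ⊓ H.eigenspace μ :=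
      Submodule.inf_iSup_genEigenspace (apply_mem_ker_pow_of_lie_eq_smul h.lie_h_y p) 1
    _ ≤ Ffil H (p - 1) := iSup_le fun μ => ?_
  by_cases hμ : ∃ c : ℤ, (c : ℂ) = μ
  · obtain ⟨c, rfl⟩ := hμ
    by_cases hcp : c < p
    · exact inf_le_right.trans (eigenspace_le_Ffil (by omega))
    · rintro v ⟨hv0, hv⟩
      rw [h.eq_zero_of_y_pow_apply_eq_zero hv p (by omega) hv0]
      exact zero_mem _
  · push Not at hμ
    simp [Module.End.eigenspace_eq_bot_of_ne_intCast hsemi hμ]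

lemma kerRangeFiltration_le_Ffil (hsemi : (⨆ c : ℤ, H.eigenspace (c : ℂ)) = ⊤) (k : ℤ) :
    kerRangeFiltration Y k ≤ Ffil H k := by
  refine iSup₂_le fun ℓ hℓ => ?_
  obtain ⟨n, hn⟩ : ∃ n : ℕ, (n : ℤ) = k + ℓ + 1 := ⟨_, Int.toNat_of_nonneg hℓ⟩
  rw [← hn, Int.toNat_natCast, ker_pow_inf_range_pow]
  calc (ker (Y ^ (n + ℓ))).map (Y ^ ℓ) ≤ (Ffil H ((n + ℓ : ℕ) - 1)).map (Y ^ ℓ) :=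
        Submodule.map_mono (h.ker_y_pow_le_Ffil hsemi _)
    _ ≤ Ffil H ((n + ℓ : ℕ) - 1 - 2 * ℓ) := h.map_y_pow_Ffil_le ℓ _
    _ = Ffil H k := by congr 1; push_cast; omega

end Complex

end IsSl2TripleEnd

theorem stmt2_general {E : Type*} [AddCommGroup E] [Module ℂ E] [FiniteDimensional ℂ E]
    (X H Y : Module.End ℂ E)
    (hHX : ⁅H, X⁆ = (2 : ℂ) • X)
    (hHY : ⁅H, Y⁆ = (-2 : ℂ) • Y)
    (hXY : ⁅X, Y⁆ = H)
    (hsemi : (⨆ j : ℤ, Module.End.eigenspace H (j : ℂ)) = ⊤) :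
    ∀ k : ℤ, Ffil H k =
      ⨆ (ℓ : ℕ) (_ : 0 ≤ k + (ℓ : ℤ) + 1),
        (LinearMap.ker (Y ^ (k + (ℓ : ℤ) + 1).toNat) ⊓ LinearMap.range (Y ^ ℓ)) := by
  intro k
  have h : IsSl2TripleEnd X H Y := ⟨hHX, hHY, hXY⟩
  exact le_antisymm (h.Ffil_le_kerRangeFiltration k) (h.kerRangeFiltration_le_Ffil hsemi k)

/-- For an `sl₂`-triple `(X, H, Y)` acting on a finite-dimensional module `E`
with `H` semisimple with integer eigenvalues and `Y` nilpotent,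
`F_k = ∑_{ℓ ≥ 0, k+ℓ+1 ≥ 0} (Ker Y^{k+ℓ+1} ⊓ Im Y^ℓ)`; in particular the filtration
depends only on `Y`. -/
theorem stmt2 {E : Type*} [AddCommGroup E] [Module ℂ E] [FiniteDimensional ℂ E]
    (X H Y : Module.End ℂ E)
    (hHX : ⁅H, X⁆ = (2 : ℂ) • X)
    (hHY : ⁅H, Y⁆ = (-2 : ℂ) • Y)
    (hXY : ⁅X, Y⁆ = H)
    (hsemi : (⨆ j : ℤ, Module.End.eigenspace H (j : ℂ)) = ⊤)
    (hnil : IsNilpotent Y) :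
    ∀ k : ℤ, Ffil H k =
      ⨆ (ℓ : ℕ) (_ : 0 ≤ k + (ℓ : ℤ) + 1),
        (LinearMap.ker (Y ^ (k + (ℓ : ℤ) + 1).toNat) ⊓ LinearMap.range (Y ^ ℓ)) :=
  stmt2_general X H Y hHX hHY hXY hsemi
end

section
/- Let E be a cominuscule representation of a simple complex Lie algebra g with highest weight ϖ, and let α₁, ..., α_r be strongly orthogonal long roots whose root spaces lie in the abelian nilradical u_-. Choose nonzero y_{α_i} ∈ g_{-α_i} and set y = y_{α₁} + ... + y_{α_r}, with φ(y) : E → E the corresponding operator. Then φ(y)^{r+1} = 0 and φ(y)^r maps the highest weight space E_ϖ onto the weight space E_{ϖ - α₁ - ... - α_r}; in particular φ(y)^r(E_ϖ) ≠ 0. -/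
/-!
The operators `Y i = φ (y i)` pairwise commute (`-αᵢ - αⱼ` is not a root) and square to zero:
`Y i` shifts a weight `χ` by `-αᵢ`, and `(χ - 2αᵢ)(hᵢ) = χ(hᵢ) - 4` has norm `> 1`. Hence
`(∑ Y i) ^ (r + 1) = 0` and `(∑ Y i) ^ r = r! • ∏ Y i`. Since `hⱼ` acts by `1` on `E_ϖ` and by `-1`
on `E_{ϖ - ∑ α}`, and `e i` kills `E_ϖ` while `y i` kills `E_{ϖ - ∑ α}` for the same reason,
the `sl₂`-relations make `∏ φ (e i)` a two-sided inverse of `∏ Y i` between these weight spaces.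
-/
noncomputable def wtSpace (g : Type*) [LieRing g] [LieAlgebra ℂ g]
    (t : LieSubalgebra ℂ g)
    (E : Type*) [AddCommGroup E] [Module ℂ E] [LieRingModule g E] [LieModule ℂ g E]
    (χ : Module.Dual ℂ t) : Submodule ℂ E :=
  ⨅ H : t, Module.End.eigenspace (LieModule.toEnd ℂ g E (H : g)) (χ H)

open Finset Function

section SquareZero

variable {R ι : Type*} [Ring R]

theorem Commute.add_pow_succ_of_mul_self_eq_zero {a b : R} (hab : Commute a b)
    (ha : a * a = 0) (n : ℕ) :
    (a + b) ^ (n + 1) = b ^ (n + 1) + (n + 1) • (a * b ^ n) := by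
  induction n with
  | zero => simp [add_comm]
  | succ n ih =>
    have hba : b * (a * b ^ n) = a * b ^ (n + 1) := by
      rw [← mul_assoc, ← hab.eq, mul_assoc, ← pow_succ']
    rw [pow_succ' _ (n + 1), ih, add_mul, mul_add, mul_add, mul_smul_comm, mul_smul_comm,
      ← mul_assoc, ha, zero_mul, smul_zero, add_zero, hba, ← pow_succ']
    module

theorem Finset.sum_pow_card_succ_eq_zero (s : Finset ι) (a : ι → R)
    (hsq : ∀ i ∈ s, a i * a i = 0) (hc : (s : Set ι).Pairwise (Commute on a)) :
    (∑ i ∈ s, a i) ^ (#s + 1) = 0 := by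
  induction s using Finset.cons_induction with
  | empty => simp
  | cons i s his ih =>
    have hcomm : Commute (a i) (∑ j ∈ s, a j) :=
      Commute.sum_right _ _ _ fun j hj ↦ hc (mem_cons_self i s) (mem_cons_of_mem hj)
        (ne_of_mem_of_not_mem hj his).symm
    have hs : (∑ j ∈ s, a j) ^ (#s + 1) = 0 :=
      ih (fun j hj ↦ hsq j (mem_cons_of_mem hj)) (hc.mono fun _ ↦ mem_cons_of_mem)
    rw [sum_cons, card_cons, hcomm.add_pow_succ_of_mul_self_eq_zero (hsq i (mem_cons_self i s)),
      pow_succ, hs, zero_mul, mul_zero, smul_zero, add_zero]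

theorem Finset.sum_pow_card_eq_factorial_smul_noncommProd (s : Finset ι) (a : ι → R)
    (hsq : ∀ i ∈ s, a i * a i = 0) (hc : (s : Set ι).Pairwise (Commute on a)) :
    (∑ i ∈ s, a i) ^ #s = (#s).factorial • s.noncommProd a hc := by
  induction s using Finset.cons_induction with
  | empty => simp
  | cons i s his ih =>
    have hsq' : ∀ j ∈ s, a j * a j = 0 := fun j hj ↦ hsq j (mem_cons_of_mem hj)
    have hc' : (s : Set ι).Pairwise (Commute on a) := hc.mono fun _ ↦ mem_cons_of_mem
    have hcomm : Commute (a i) (∑ j ∈ s, a j) :=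
      Commute.sum_right _ _ _ fun j hj ↦ hc (mem_cons_self i s) (mem_cons_of_mem hj)
        (ne_of_mem_of_not_mem hj his).symm
    rw [sum_cons, card_cons, hcomm.add_pow_succ_of_mul_self_eq_zero (hsq i (mem_cons_self i s)),
      s.sum_pow_card_succ_eq_zero a hsq' hc', ih hsq' hc', noncommProd_cons, mul_smul_comm,
      smul_smul, Nat.factorial_succ, zero_add]

end SquareZero

theorem Finset.noncommProd_apply_noncommProd_apply_eq_self {R M ι : Type*} [Semiring R]
    [AddCommMonoid M] [Module R M] (s : Finset ι) (a b : ι → Module.End R M)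
    (ha : (s : Set ι).Pairwise (Commute on a)) (hb : (s : Set ι).Pairwise (Commute on b))
    (hba : (s : Set ι).Pairwise fun i j ↦ Commute (b i) (a j)) {v : M}
    (hv : ∀ i ∈ s, a i (b i v) = v) :
    s.noncommProd a ha (s.noncommProd b hb v) = v := by
  rw [← Module.End.mul_apply, ← noncommProd_mul_distrib a b ha hb hba]
  exact noncommProd_induction s _ _ (fun f : Module.End R M ↦ f v = v)
    (fun f f' hf hf' ↦ by rw [Module.End.mul_apply, hf', hf]) rfl hv

theorem Submodule.map_eq_of_rightInvOn {R M N : Type*} [Semiring R] [AddCommMonoid M]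
    [AddCommMonoid N] [Module R M] [Module R N] {f : M →ₗ[R] N} {f' : N → M}
    {p : Submodule R M} {q : Submodule R N} (hf : Set.MapsTo f p q) (hf' : Set.MapsTo f' q p)
    (hinv : Set.RightInvOn f' f q) : p.map f = q :=
  SetLike.coe_injective <| by
    rw [Submodule.map_coe]; exact (hinv.surjOn hf').image_eq_of_mapsTo hf

section WeightSpaces

variable {g : Type*} [LieRing g] [LieAlgebra ℂ g] {t : LieSubalgebra ℂ g}
  {E : Type*} [AddCommGroup E] [Module ℂ E] [LieRingModule g E] [LieModule ℂ g E]
  {α : Module.Dual ℂ t} {e y : g} {H : t}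

theorem mem_wtSpace_iff {χ : Module.Dual ℂ t} {v : E} :
    v ∈ wtSpace g t E χ ↔ ∀ H : t, ⁅(H : g), v⁆ = χ H • v := by
  simp only [wtSpace, Submodule.mem_iInf, Module.End.mem_eigenspace_iff,
    LieModule.toEnd_apply_apply]

theorem lie_mem_wtSpace_add {β χ : Module.Dual ℂ t} {x : g} {v : E}
    (hx : x ∈ wtSpace g t g β) (hv : v ∈ wtSpace g t E χ) :
    ⁅x, v⁆ ∈ wtSpace g t E (β + χ) := by
  rw [mem_wtSpace_iff] at hx hv ⊢
  intro H
  rw [leibniz_lie, hx H, hv H, smul_lie, lie_smul, LinearMap.add_apply, add_smul, add_comm]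

theorem lie_eq_zero_of_wtSpace_add_eq_bot {β χ : Module.Dual ℂ t} {x : g} {v : E}
    (hx : x ∈ wtSpace g t g β) (hv : v ∈ wtSpace g t E χ) (hβχ : wtSpace g t E (β + χ) = ⊥) :
    ⁅x, v⁆ = 0 := by
  simpa [hβχ] using lie_mem_wtSpace_add hx hv

theorem lie_lie_eq_smul_of_wtSpace_add_eq_bot {β χ : Module.Dual ℂ t} {x x' : g} {H : t}
    {c : ℂ} {v : E} (hx : x ∈ wtSpace g t g β) (hxx' : ⁅x, x'⁆ = c • (H : g))
    (hv : v ∈ wtSpace g t E χ) (hβχ : wtSpace g t E (β + χ) = ⊥) :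
    ⁅x, ⁅x', v⁆⁆ = (c * χ H) • v := by
  rw [leibniz_lie, lie_eq_zero_of_wtSpace_add_eq_bot hx hv hβχ, lie_zero, add_zero, hxx',
    smul_lie, mem_wtSpace_iff.mp hv H, smul_smul]

theorem commute_toEnd_of_wtSpace_add_eq_bot {β γ : Module.Dual ℂ t} {x x' : g}
    (hx : x ∈ wtSpace g t g β) (hx' : x' ∈ wtSpace g t g γ) (hβγ : wtSpace g t g (β + γ) = ⊥) :
    Commute (LieModule.toEnd ℂ g E x) (LieModule.toEnd ℂ g E x') := by
  refine LinearMap.ext fun v ↦ ?_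
  simp only [Module.End.mul_apply, LieModule.toEnd_apply_apply]
  rw [leibniz_lie, lie_eq_zero_of_wtSpace_add_eq_bot hx hx' hβγ, zero_lie, zero_add]

theorem toEnd_mul_self_eq_zero (hdec : (⨆ χ : Module.Dual ℂ t, wtSpace g t E χ) = ⊤)
    {β : Module.Dual ℂ t} {x : g} (hx : x ∈ wtSpace g t g β)
    (hβ : ∀ χ, wtSpace g t E χ ≠ ⊥ → wtSpace g t E (β + (β + χ)) = ⊥) :
    LieModule.toEnd ℂ g E x * LieModule.toEnd ℂ g E x = 0 := by
  rw [← LinearMap.ker_eq_top, eq_top_iff, ← hdec, iSup_le_iff]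
  intro χ v hv
  rw [LinearMap.mem_ker, Module.End.mul_apply, LieModule.toEnd_apply_apply,
    LieModule.toEnd_apply_apply]
  by_cases hχ : wtSpace g t E χ = ⊥
  · rw [hχ, Submodule.mem_bot] at hv
    rw [hv, lie_zero, lie_zero]
  · exact lie_eq_zero_of_wtSpace_add_eq_bot hx (lie_mem_wtSpace_add hx hv) (hβ χ hχ)

theorem noncommProd_toEnd_apply_mem_wtSpace {ι : Type*} (s : Finset ι) (x : ι → g)
    (β : ι → Module.Dual ℂ t) (hx : ∀ i ∈ s, x i ∈ wtSpace g t g (β i))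
    (hc : (s : Set ι).Pairwise (Commute on fun i ↦ LieModule.toEnd ℂ g E (x i)))
    {χ : Module.Dual ℂ t} {v : E} (hv : v ∈ wtSpace g t E χ) :
    s.noncommProd (fun i ↦ LieModule.toEnd ℂ g E (x i)) hc v ∈
      wtSpace g t E ((∑ i ∈ s, β i) + χ) := by
  induction s using Finset.cons_induction with
  | empty => simpa using hv
  | cons i s his ih =>
    rw [noncommProd_cons, Module.End.mul_apply, sum_cons, add_assoc]
    exact lie_mem_wtSpace_add (hx i (mem_cons_self i s))
      (ih (fun j hj ↦ hx j (mem_cons_of_mem hj)) (hc.mono fun _ ↦ mem_cons_of_mem))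


theorem wtSpace_eq_bot_of_one_lt_norm
    (hbound : ∀ χ : Module.Dual ℂ t, wtSpace g t E χ ≠ ⊥ → ‖χ H‖ ≤ 1)
    {χ : Module.Dual ℂ t} (hχ : 1 < ‖χ H‖) : wtSpace g t E χ = ⊥ :=
  by_contra fun hne ↦ (hbound χ hne).not_gt hχ

theorem toEnd_mul_self_eq_zero_of_norm_le_one
    (hdec : (⨆ χ : Module.Dual ℂ t, wtSpace g t E χ) = ⊤)
    (hbound : ∀ χ : Module.Dual ℂ t, wtSpace g t E χ ≠ ⊥ → ‖χ H‖ ≤ 1)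
    (hy : y ∈ wtSpace g t g (-α)) (hαH : α H = 2) :
    LieModule.toEnd ℂ g E y * LieModule.toEnd ℂ g E y = 0 :=
  toEnd_mul_self_eq_zero hdec hy fun χ hχ ↦ wtSpace_eq_bot_of_one_lt_norm hbound <| by
    have h4 : ‖(4 : ℂ)‖ - ‖χ H‖ ≤ ‖4 - χ H‖ := norm_sub_norm_le _ _
    rw [LinearMap.add_apply, LinearMap.add_apply, LinearMap.neg_apply, hαH,
      show -2 + (-2 + χ H) = -(4 - χ H) by ring, norm_neg]
    norm_num at h4
    linarith [hbound χ hχ]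

theorem lie_lie_eq_self_of_apply_eq_neg_one
    (hbound : ∀ χ : Module.Dual ℂ t, wtSpace g t E χ ≠ ⊥ → ‖χ H‖ ≤ 1)
    (hy : y ∈ wtSpace g t g (-α)) (hey : ⁅e, y⁆ = (H : g)) (hαH : α H = 2)
    {χ : Module.Dual ℂ t} (hχ : χ H = -1) {w : E} (hw : w ∈ wtSpace g t E χ) :
    ⁅y, ⁅e, w⁆⁆ = w := by
  have hye : ⁅y, e⁆ = (-1 : ℂ) • (H : g) := by rw [← lie_skew, hey, neg_one_smul]
  rw [lie_lie_eq_smul_of_wtSpace_add_eq_bot hy hye hw (wtSpace_eq_bot_of_one_lt_norm hbound (by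
    rw [LinearMap.add_apply, LinearMap.neg_apply, hαH, hχ]; norm_num)), hχ, neg_one_mul,
    neg_neg, one_smul]

theorem lie_lie_eq_self_of_apply_eq_one
    (hbound : ∀ χ : Module.Dual ℂ t, wtSpace g t E χ ≠ ⊥ → ‖χ H‖ ≤ 1)
    (he : e ∈ wtSpace g t g α) (hey : ⁅e, y⁆ = (H : g)) (hαH : α H = 2)
    {χ : Module.Dual ℂ t} (hχ : χ H = 1) {v : E} (hv : v ∈ wtSpace g t E χ) :
    ⁅e, ⁅y, v⁆⁆ = v := by
  rw [lie_lie_eq_smul_of_wtSpace_add_eq_bot he (hey.trans (one_smul ℂ _).symm) hv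
    (wtSpace_eq_bot_of_one_lt_norm hbound (by rw [LinearMap.add_apply, hαH, hχ]; norm_num)),
    hχ, one_mul, one_smul]

end WeightSpaces

theorem stmt5_general (g : Type*) [LieRing g] [LieAlgebra ℂ g]
    (t : LieSubalgebra ℂ g)
    (E : Type*) [AddCommGroup E] [Module ℂ E] [LieRingModule g E] [LieModule ℂ g E]
    (hdec : (⨆ χ : Module.Dual ℂ t, wtSpace g t E χ) = ⊤)
    (r : ℕ) (α : Fin r → Module.Dual ℂ t) (e y : Fin r → g) (h : Fin r → t)
    (ϖ : Module.Dual ℂ t)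
    (hy : ∀ i, y i ∈ wtSpace g t g (-(α i)))
    (he : ∀ i, e i ∈ wtSpace g t g (α i))
    (htriple : ∀ i, ⁅e i, y i⁆ = (h i : g))
    (hα2 : ∀ i, (α i) (h i) = 2)
    (horth : ∀ i j, i ≠ j → (α j) (h i) = 0)
    (hstrong : ∀ i j, i ≠ j → wtSpace g t g (α i + α j) = ⊥ ∧
      wtSpace g t g (-(α i) - α j) = ⊥ ∧ wtSpace g t g (α i - α j) = ⊥)
    (hbound : ∀ χ : Module.Dual ℂ t, wtSpace g t E χ ≠ ⊥ →
      ∀ i, ‖χ (h i)‖ ≤ 1)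
    (hϖ1 : ∀ i, ϖ (h i) = 1)
    (hϖ0 : wtSpace g t E ϖ ≠ ⊥) :
    ((∑ i, LieModule.toEnd ℂ g E (y i)) ^ (r + 1) = 0) ∧
    Submodule.map ((∑ i, LieModule.toEnd ℂ g E (y i)) ^ r) (wtSpace g t E ϖ)
      = wtSpace g t E (ϖ - ∑ i, α i) ∧
    wtSpace g t E (ϖ - ∑ i, α i) ≠ ⊥ := by
  set Y : Fin r → Module.End ℂ E := fun i ↦ LieModule.toEnd ℂ g E (y i)
  set X : Fin r → Module.End ℂ E := fun i ↦ LieModule.toEnd ℂ g E (e i)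
  set ω := ϖ - ∑ i, α i
  have hbound' (i : Fin r) (χ : Module.Dual ℂ t) (hχ : wtSpace g t E χ ≠ ⊥) := hbound χ hχ i
  have hω (i : Fin r) : ω (h i) = -1 := by
    rw [LinearMap.sub_apply, LinearMap.sum_apply, sum_eq_single_of_mem i (mem_univ i)
      fun j _ hji ↦ horth i j hji.symm, hϖ1, hα2]
    norm_num
  have hYY : ((univ : Finset (Fin r)) : Set (Fin r)).Pairwise (Commute on Y) :=
    fun i _ j _ hij ↦ commute_toEnd_of_wtSpace_add_eq_bot (hy i) (hy j)
      (by rw [← sub_eq_add_neg]; exact (hstrong i j hij).2.1)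
  have hXX : ((univ : Finset (Fin r)) : Set (Fin r)).Pairwise (Commute on X) :=
    fun i _ j _ hij ↦ commute_toEnd_of_wtSpace_add_eq_bot (he i) (he j) (hstrong i j hij).1
  have hXY : ((univ : Finset (Fin r)) : Set (Fin r)).Pairwise fun i j ↦ Commute (X i) (Y j) :=
    fun i _ j _ hij ↦ commute_toEnd_of_wtSpace_add_eq_bot (he i) (hy j)
      (by rw [← sub_eq_add_neg]; exact (hstrong i j hij).2.2)
  have hY2 : ∀ i ∈ univ, Y i * Y i = 0 := fun i _ ↦
    toEnd_mul_self_eq_zero_of_norm_le_one hdec (hbound' i) (hy i) (hα2 i)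
  set Q := univ.noncommProd Y hYY
  set Q' := univ.noncommProd X hXX
  have hQ : Set.MapsTo Q (wtSpace g t E ϖ) (wtSpace g t E ω) := fun v hv ↦ by
    simpa [ω, sub_eq_neg_add] using
      noncommProd_toEnd_apply_mem_wtSpace univ y _ (fun i _ ↦ hy i) hYY hv
  have hQ' : Set.MapsTo Q' (wtSpace g t E ω) (wtSpace g t E ϖ) := fun w hw ↦ by
    simpa [ω] using noncommProd_toEnd_apply_mem_wtSpace univ e _ (fun i _ ↦ he i) hXX hw
  have hQQ' : Set.RightInvOn Q' Q (wtSpace g t E ω) := fun w hw ↦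
    noncommProd_apply_noncommProd_apply_eq_self univ Y X hYY hXX hXY fun i _ ↦
      lie_lie_eq_self_of_apply_eq_neg_one (hbound' i) (hy i) (htriple i) (hα2 i) (hω i) hw
  have hQ'Q : Set.LeftInvOn Q' Q (wtSpace g t E ϖ) := fun v hv ↦
    noncommProd_apply_noncommProd_apply_eq_self univ X Y hXX hYY
      (fun i hi j hj hij ↦ (hXY hj hi hij.symm).symm) fun i _ ↦
      lie_lie_eq_self_of_apply_eq_one (hbound' i) (he i) (htriple i) (hα2 i) (hϖ1 i) hv
  have hmap : (wtSpace g t E ϖ).map Q = wtSpace g t E ω :=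
    Submodule.map_eq_of_rightInvOn hQ hQ' hQQ'
  refine ⟨by simpa using univ.sum_pow_card_succ_eq_zero Y hY2 hYY, ?_, ?_⟩
  · have hpow := univ.sum_pow_card_eq_factorial_smul_noncommProd Y hY2 hYY
    rw [card_univ, Fintype.card_fin, ← Nat.cast_smul_eq_nsmul ℂ] at hpow
    rw [hpow, Submodule.map_smul _ _ _ (Nat.cast_ne_zero.mpr r.factorial_ne_zero), hmap]
  · obtain ⟨v, hv, hv0⟩ := (Submodule.ne_bot_iff _).mp hϖ0
    exact (Submodule.ne_bot_iff _).mpr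
      ⟨Q v, hQ hv, fun hQv ↦ hv0 (by rw [← hQ'Q hv, hQv, map_zero])⟩

/-- Let `E` be a cominuscule representation of a simple complex Lie algebra
`g` with highest weight `ϖ`, and `α₁, ..., α_r` strongly orthogonal long roots (root
vectors `y i ∈ g_{-α_i}`, with `sl₂`-triples `(e_i, h_i, y_i)`; the cominuscule property
gives `|⟨χ, α_i^∨⟩| ≤ 1` for all weights `χ` of `E`, and `⟨ϖ, α_i^∨⟩ = 1`).  Set
`φ(y) = ∑ φ(y_{α_i})`.  Then `φ(y)^{r+1} = 0` and `φ(y)^r` maps the highest weight space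
`E_ϖ` onto `E_{ϖ - α₁ - ⋯ - α_r}`, which is nonzero. -/
theorem stmt5 (g : Type*) [LieRing g] [LieAlgebra ℂ g] [FiniteDimensional ℂ g]
    [LieAlgebra.IsSemisimple ℂ g]
    (t : LieSubalgebra ℂ g) [LieSubalgebra.IsCartanSubalgebra t]
    (E : Type*) [AddCommGroup E] [Module ℂ E] [LieRingModule g E] [LieModule ℂ g E]
    [FiniteDimensional ℂ E]
    (hdec : (⨆ χ : Module.Dual ℂ t, wtSpace g t E χ) = ⊤)
    (r : ℕ) (α : Fin r → Module.Dual ℂ t) (e y : Fin r → g) (h : Fin r → t)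
    (ϖ : Module.Dual ℂ t)
    (hy : ∀ i, y i ∈ wtSpace g t g (-(α i))) (hy0 : ∀ i, y i ≠ 0)
    (he : ∀ i, e i ∈ wtSpace g t g (α i))
    (htriple : ∀ i, ⁅e i, y i⁆ = (h i : g))
    (hα2 : ∀ i, (α i) (h i) = 2)
    (horth : ∀ i j, i ≠ j → (α j) (h i) = 0)
    (hstrong : ∀ i j, i ≠ j → wtSpace g t g (α i + α j) = ⊥ ∧
      wtSpace g t g (-(α i) - α j) = ⊥ ∧ wtSpace g t g (α i - α j) = ⊥)
    (hbound : ∀ χ : Module.Dual ℂ t, wtSpace g t E χ ≠ ⊥ →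
      ∀ i, ‖χ (h i)‖ ≤ 1)
    (hϖ1 : ∀ i, ϖ (h i) = 1)
    (hϖ0 : wtSpace g t E ϖ ≠ ⊥) :
    ((∑ i, LieModule.toEnd ℂ g E (y i)) ^ (r + 1) = 0) ∧
    Submodule.map ((∑ i, LieModule.toEnd ℂ g E (y i)) ^ r) (wtSpace g t E ϖ)
      = wtSpace g t E (ϖ - ∑ i, α i) ∧
    wtSpace g t E (ϖ - ∑ i, α i) ≠ ⊥ :=
  stmt5_general g t E hdec r α e y h ϖ hy he htriple hα2 horth hstrong hbound hϖ1 hϖ0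
end

section
/- Let (α₁, ..., α_p) be the maximal dominant orthogonal sequence for the cominuscule fundamental weight ϖ of a simple complex Lie algebra g of Hermitian type. Then ϖ - α₁ - ... - α_p is the lowest weight of the irreducible g-module with highest weight ϖ. -/
/-!
The cascade roots `α j` are mutually orthogonal, and long because a highest root of a
subsystem is at least as long as any root of it; with `α j` having `ζ`-coordinate `1`,
this gives `⟨ϖ, α j^∨⟩ = 1`. Hence the product `w` of the commuting reflections `s_{α j}`
preserves the roots and sends `ϖ` to `ϖ - ∑ α j`.

As `w` is self-adjoint, `⟨ϖ - ∑ α j, b k⟩ = ⟨ϖ, w (b k)⟩` is a positive multiple of the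
`ζ`-coordinate of the root `w (b k)`, which is `-1`, `0` or `1`. If it were `1`, then `w (b k)`
would pair nonnegatively with every `α j`, i.e. `b k` nonpositively. But the first `α j` not
orthogonal to `b k` pairs positively with it: either `k` still lies in the subsystem on which
`α j` is dominant, or `k` was cut off from the cascade earlier and is orthogonal to all later
roots. So `b k` is orthogonal to every `α j`, whence `w (b k) = b k`, `k = ζ`, contradicting
`⟨α (q - 1), b ζ⟩ ≠ 0`.
-/

open scoped RealInnerProductSpace

open Finset

section Reflections

variable {E : Type*} [NormedAddCommGroup E] [InnerProductSpace ℝ E]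

theorem reflection_orthogonalComplement_singleton_apply (v x : E) :
    (ℝ ∙ v)ᗮ.reflection x = x - (2 * ⟪x, v⟫ / ⟪v, v⟫) • v := by
  rw [Submodule.reflection_orthogonal_apply, Submodule.reflection_singleton_apply,
    real_inner_self_eq_norm_sq, real_inner_comm]
  simp [mul_div_assoc, ← smul_smul, two_smul]

noncomputable def reflectionsProd (α : ℕ → E) : ℕ → E ≃ₗᵢ[ℝ] E
  | 0 => LinearIsometryEquiv.refl ℝ E
  | m + 1 => (reflectionsProd α m).trans (ℝ ∙ α m)ᗮ.reflection

theorem reflectionsProd_mem {R : Set E}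
    (hrefl : ∀ a ∈ R, ∀ β ∈ R, β - (2 * ⟪β, a⟫ / ⟪a, a⟫) • a ∈ R) {α : ℕ → E} {m : ℕ}
    (hα : ∀ j < m, α j ∈ R) {β : E} (hβ : β ∈ R) : reflectionsProd α m β ∈ R := by
  induction m with
  | zero => exact hβ
  | succ m ih =>
    rw [reflectionsProd, LinearIsometryEquiv.trans_apply,
      reflection_orthogonalComplement_singleton_apply]
    exact hrefl _ (hα m m.lt_succ_self) _ (ih fun j hj => hα j (hj.trans m.lt_succ_self))

variable {α : ℕ → E} {m : ℕ}

theorem reflectionsProd_apply (horth : ∀ i j, i < j → j < m → ⟪α i, α j⟫ = 0) (x : E) :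
    reflectionsProd α m x = x - ∑ j ∈ range m, (2 * ⟪x, α j⟫ / ⟪α j, α j⟫) • α j := by
  induction m with
  | zero => simp [reflectionsProd]
  | succ m ih =>
    have ih := ih fun i j hij hj => horth i j hij (hj.trans m.lt_succ_self)
    -- the reflections commute: `α m` is orthogonal to the earlier roots
    have hinner : ⟪reflectionsProd α m x, α m⟫ = ⟪x, α m⟫ := by
      rw [ih, inner_sub_left, sum_inner, sub_eq_self]
      exact sum_eq_zero fun j hj => by
        rw [real_inner_smul_left, horth j m (mem_range.1 hj) m.lt_succ_self, mul_zero]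
    rw [reflectionsProd, LinearIsometryEquiv.trans_apply,
      reflection_orthogonalComplement_singleton_apply, hinner, ih, sum_range_succ]
    abel

theorem inner_reflectionsProd_left (horth : ∀ i j, i < j → j < m → ⟪α i, α j⟫ = 0)
    (x y : E) : ⟪reflectionsProd α m x, y⟫ = ⟪x, reflectionsProd α m y⟫ := by
  simp only [reflectionsProd_apply horth, inner_sub_left, inner_sub_right, sum_inner,
    inner_sum, real_inner_smul_left, real_inner_smul_right]
  congr 1
  refine sum_congr rfl fun j _ => ?_
  rw [real_inner_comm (α j) x, real_inner_comm y (α j)]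
  ring

theorem inner_reflectionsProd_apply_eq_neg (horth : ∀ i j, i < j → j < m → ⟪α i, α j⟫ = 0)
    {j : ℕ} (hj : j < m) (hαj : α j ≠ 0) (x : E) :
    ⟪reflectionsProd α m x, α j⟫ = -⟪x, α j⟫ := by
  rw [reflectionsProd_apply horth, inner_sub_left, sum_inner,
    sum_eq_single_of_mem j (mem_range.2 hj)]
  · rw [real_inner_smul_left]
    field_simp [inner_self_ne_zero.2 hαj]
    ring
  · intro l hl hlj
    rw [real_inner_smul_left, mul_eq_zero]
    right
    rcases hlj.lt_or_gt with h | h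
    · exact horth l j h hj
    · rw [real_inner_comm]; exact horth j l h (mem_range.1 hl)

end Reflections

section Basis

variable {ι E : Type*} [NormedAddCommGroup E] [InnerProductSpace ℝ E]
  (b : Module.Basis ι ℝ E)

theorem Module.Basis.support_repr_sub_smul_subset {S : Set ι} {x : E}
    (hx : ↑(b.repr x).support ⊆ S) {k : ι} (hk : k ∈ S) (c : ℝ) :
    ↑(b.repr (x - c • b k)).support ⊆ S := by
  classical
  rw [Finsupp.support_subset_iff] at hx ⊢
  intro l hl
  have hkl : k ≠ l := fun h => hl (h ▸ hk)
  simp [hx l hl, hkl]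

variable [Fintype ι]

theorem Module.Basis.inner_eq_sum_repr_mul (x y : E) : ⟪x, y⟫ = ∑ k, b.repr x k * ⟪b k, y⟫ := by
  nth_rw 1 [← b.sum_repr x]
  simp only [sum_inner, real_inner_smul_left]

noncomputable def Module.Basis.height : E →ₗ[ℝ] ℝ := ∑ k, b.coord k

theorem Module.Basis.height_self (k : ι) : b.height (b k) = 1 := by
  classical
  simp [Module.Basis.height, Finsupp.single_apply]

end Basis

def IsHighestRootOn {ι E : Type*} [NormedAddCommGroup E] [InnerProductSpace ℝ E]
    (b : Module.Basis ι ℝ E) (R : Finset E) (S : Set ι) (α : E) : Prop :=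
  α ∈ R ∧ ↑(b.repr α).support ⊆ S ∧
    ∀ γ ∈ R, ↑(b.repr γ).support ⊆ S → ∀ k, b.repr γ k ≤ b.repr α k

namespace IsHighestRootOn

variable {ι E : Type*} [NormedAddCommGroup E] [InnerProductSpace ℝ E]
  {b : Module.Basis ι ℝ E} {R : Finset E} {S : Set ι} {α : E}

theorem repr_eq_zero_of_notMem (h : IsHighestRootOn b R S α) {k : ι} (hk : k ∉ S) :
    b.repr α k = 0 :=
  Finsupp.support_subset_iff.1 h.2.1 k hk

theorem one_le_repr_of_mem (h : IsHighestRootOn b R S α) {k : ι} (hbk : b k ∈ R) (hk : k ∈ S) :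
    1 ≤ b.repr α k := by
  classical
  have hsupp : ↑(b.repr (b k)).support ⊆ S := by
    simpa using hk
  simpa using h.2.2 (b k) hbk hsupp k

theorem inner_nonneg_of_mem (h : IsHighestRootOn b R S α)
    (hrefl : ∀ a ∈ R, ∀ β ∈ R, β - (2 * ⟪β, a⟫ / ⟪a, a⟫) • a ∈ R)
    {k : ι} (hbk : b k ∈ R) (hk : k ∈ S) : 0 ≤ ⟪α, b k⟫ := by
  by_contra! hneg
  have hc : 2 * ⟪α, b k⟫ / ⟪b k, b k⟫ < 0 :=
    div_neg_of_neg_of_pos (by linarith) (real_inner_self_pos.2 (b.ne_zero k))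
  -- reflecting `α` in `b k` would raise its `k`-th coordinate
  have hle := h.2.2 _ (hrefl _ hbk _ h.1) (b.support_repr_sub_smul_subset h.2.1 hk _) k
  simp only [map_sub, map_smul, Finsupp.sub_apply, Finsupp.smul_apply, Module.Basis.repr_self,
    Finsupp.single_eq_same, smul_eq_mul, mul_one] at hle
  linarith

variable [Fintype ι]

/-- If some root were longer than `α`, a longest one of maximal height would be strictly
shorter than `α` in some simple direction `k`, and reflecting it in `b k` would raise it. -/
theorem norm_le (h : IsHighestRootOn b R S α)
    (hrefl : ∀ a ∈ R, ∀ β ∈ R, β - (2 * ⟪β, a⟫ / ⟪a, a⟫) • a ∈ R) (hsimple : ∀ k, b k ∈ R)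
    {γ : E} (hγ : γ ∈ R) (hγS : ↑(b.repr γ).support ⊆ S) : ‖γ‖ ≤ ‖α‖ := by
  classical
  by_contra! hlong
  obtain ⟨γ, hγT, hmax⟩ :=
    (R.filter fun γ => ↑(b.repr γ).support ⊆ S ∧ ‖α‖ < ‖γ‖).exists_max_image b.height
      ⟨γ, mem_filter.2 ⟨hγ, hγS, hlong⟩⟩
  obtain ⟨hγR, hγS, hlong⟩ := mem_filter.1 hγT
  have hneg : ⟪α - γ, γ⟫ < 0 := by
    rw [inner_sub_left, real_inner_self_eq_norm_sq]
    nlinarith [real_inner_le_norm α γ, norm_nonneg α]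
  rw [b.inner_eq_sum_repr_mul] at hneg
  obtain ⟨k, -, hk⟩ := exists_lt_of_sum_lt (hneg.trans_eq sum_const_zero.symm)
  have hdiff : 0 ≤ b.repr (α - γ) k := by
    simpa [sub_nonneg] using h.2.2 γ hγR hγS k
  have hkγ : ⟪γ, b k⟫ < 0 := by
    rw [real_inner_comm]
    exact neg_of_mul_neg_right hk hdiff
  have hkS : k ∈ S := by
    by_contra hkS
    simp [h.repr_eq_zero_of_notMem hkS, Finsupp.support_subset_iff.1 hγS k hkS] at hk
  have hc : 2 * ⟪γ, b k⟫ / ⟪b k, b k⟫ < 0 :=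
    div_neg_of_neg_of_pos (by linarith) (real_inner_self_pos.2 (b.ne_zero k))
  have hreflT := hmax _ <| mem_filter.2 ⟨hrefl _ (hsimple k) _ hγR,
    b.support_repr_sub_smul_subset hγS hkS _, by
      rwa [← reflection_orthogonalComplement_singleton_apply, LinearIsometryEquiv.norm_map]⟩
  rw [map_sub, map_smul, b.height_self, smul_eq_mul, mul_one] at hreflT
  linarith

theorem norm_eq_of_mem (h : IsHighestRootOn b R S α)
    (hrefl : ∀ a ∈ R, ∀ β ∈ R, β - (2 * ⟪β, a⟫ / ⟪a, a⟫) • a ∈ R) (hsimple : ∀ k, b k ∈ R)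
    {ζ : ι} (hζlong : ∀ β ∈ R, ‖β‖ ≤ ‖b ζ‖) (hζ : ζ ∈ S) : ‖α‖ = ‖b ζ‖ :=
  le_antisymm (hζlong _ h.1) (h.norm_le hrefl hsimple (hsimple ζ) (by simpa using hζ))

end IsHighestRootOn

theorem eq_zero_of_forall_nonpos_of_first_nonneg {f : ℕ → ℝ} {q : ℕ}
    (hfirst : ∀ j₀ < q, (∀ j < j₀, f j = 0) → 0 ≤ f j₀) (hnonpos : ∀ j < q, f j ≤ 0) :
    ∀ j < q, f j = 0 := by
  intro j
  induction j using Nat.strong_induction_on with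
  | _ j ih =>
    exact fun hj => le_antisymm (hnonpos j hj) (hfirst j hj fun i hi => ih i hi (hi.trans hj))

section Cascade

variable {ι E : Type*} [NormedAddCommGroup E] [InnerProductSpace ℝ E] {b : Module.Basis ι ℝ E}

/-- The connected component of `ζ` in the Dynkin diagram of the simple roots indexed by `T`. -/
def Module.Basis.componentIn (b : Module.Basis ι ℝ E) (T : Set ι) (ζ : ι) : Set ι :=
  {k | k ∈ T ∧ Relation.ReflTransGen (fun a c => a ∈ T ∧ c ∈ T ∧ ⟪b a, b c⟫ ≠ 0) ζ k}

theorem Module.Basis.componentIn_subset (T : Set ι) (ζ : ι) : b.componentIn T ζ ⊆ T :=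
  fun _ hk => hk.1

theorem Module.Basis.inner_eq_zero_of_mem_componentIn {T : Set ι} {ζ k l : ι} (hkT : k ∈ T)
    (hk : k ∉ b.componentIn T ζ) (hl : l ∈ b.componentIn T ζ) : ⟪b l, b k⟫ = 0 := by
  by_contra hne
  exact hk ⟨hkT, hl.2.tail ⟨hl.1, hkT, hne⟩⟩

variable {α : ℕ → E} {Pi' : ℕ → Set ι} {ζ : ι} {q : ℕ}

theorem cascade_antitone
    (hstep : ∀ i, i + 1 < q → Pi' (i + 1) = b.componentIn {k | k ∈ Pi' i ∧ ⟪α i, b k⟫ = 0} ζ)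
    {i j : ℕ} (hij : i ≤ j) (hj : j < q) : Pi' j ⊆ Pi' i := by
  induction j, hij using Nat.le_induction with
  | base => exact subset_rfl
  | succ j hij ih =>
    rw [hstep j hj]
    exact (b.componentIn_subset _ _).trans fun k hk => ih (by omega) hk.1

theorem inner_cascade_simple_eq_zero
    (hstep : ∀ i, i + 1 < q → Pi' (i + 1) = b.componentIn {k | k ∈ Pi' i ∧ ⟪α i, b k⟫ = 0} ζ)
    {i j : ℕ} (hij : i < j) (hj : j < q) {k : ι} (hk : k ∈ Pi' j) : ⟪α i, b k⟫ = 0 := by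
  have hk := cascade_antitone hstep hij hj hk
  rw [hstep i (by omega)] at hk
  exact (b.componentIn_subset _ _ hk).2

variable [Fintype ι]

theorem inner_cascade_eq_zero
    (hstep : ∀ i, i + 1 < q → Pi' (i + 1) = b.componentIn {k | k ∈ Pi' i ∧ ⟪α i, b k⟫ = 0} ζ)
    (hsupp : ∀ j < q, ↑(b.repr (α j)).support ⊆ Pi' j)
    {i j : ℕ} (hij : i < j) (hj : j < q) : ⟪α i, α j⟫ = 0 := by
  rw [real_inner_comm, b.inner_eq_sum_repr_mul]
  refine sum_eq_zero fun k _ => ?_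
  by_cases hk : k ∈ Pi' j
  · rw [real_inner_comm, inner_cascade_simple_eq_zero hstep hij hj hk, mul_zero]
  · rw [Finsupp.support_subset_iff.1 (hsupp j hj) k hk, zero_mul]

theorem inner_simple_cascade_eq_zero_of_notMem_succ
    (hstep : ∀ i, i + 1 < q → Pi' (i + 1) = b.componentIn {k | k ∈ Pi' i ∧ ⟪α i, b k⟫ = 0} ζ)
    (hsupp : ∀ j < q, ↑(b.repr (α j)).support ⊆ Pi' j)
    {j j' : ℕ} (hjj' : j < j') (hj' : j' < q) {k : ι} (hk : k ∈ Pi' j) (hkα : ⟪α j, b k⟫ = 0)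
    (hk' : k ∉ Pi' (j + 1)) : ⟪b k, α j'⟫ = 0 := by
  rw [real_inner_comm, b.inner_eq_sum_repr_mul]
  refine sum_eq_zero fun l _ => ?_
  by_cases hl : l ∈ Pi' j'
  · have hl := cascade_antitone hstep hjj' hj' hl
    rw [hstep j (by omega)] at hl hk'
    rw [b.inner_eq_zero_of_mem_componentIn (by exact ⟨hk, hkα⟩) hk' hl, mul_zero]
  · rw [Finsupp.support_subset_iff.1 (hsupp j' hj') l hl, zero_mul]

theorem inner_simple_cascade_nonneg_of_first
    (hPi0 : Pi' 0 = Set.univ)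
    (hstep : ∀ i, i + 1 < q → Pi' (i + 1) = b.componentIn {k | k ∈ Pi' i ∧ ⟪α i, b k⟫ = 0} ζ)
    (hsupp : ∀ j < q, ↑(b.repr (α j)).support ⊆ Pi' j)
    (hdom : ∀ j < q, ∀ k ∈ Pi' j, 0 ≤ ⟪α j, b k⟫)
    {k : ι} {j₀ : ℕ} (hj₀ : j₀ < q) (hzero : ∀ j < j₀, ⟪b k, α j⟫ = 0) :
    0 ≤ ⟪b k, α j₀⟫ := by
  have key : ∀ j ≤ j₀, k ∈ Pi' j ∨ ∀ j', j ≤ j' → j' < q → ⟪b k, α j'⟫ = 0 := by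
    intro j hj
    induction j with
    | zero => exact Or.inl (hPi0 ▸ Set.mem_univ k)
    | succ j ih =>
      rcases ih (by omega) with hk | hlater
      · by_cases hk' : k ∈ Pi' (j + 1)
        · exact Or.inl hk'
        · refine Or.inr fun j' hjj' hj' => ?_
          refine inner_simple_cascade_eq_zero_of_notMem_succ hstep hsupp (by omega) hj' hk ?_ hk'
          rw [real_inner_comm]
          exact hzero j (by omega)
      · exact Or.inr fun j' hjj' hj' => hlater j' (by omega) hj'
  rcases key j₀ le_rfl with hk | hlater
  · rw [real_inner_comm]
    exact hdom j₀ hj₀ k hk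
  · exact (hlater j₀ le_rfl hj₀).ge

end Cascade

section Cominuscule

variable {ι E : Type*} [NormedAddCommGroup E] [InnerProductSpace ℝ E]
  {b : Module.Basis ι ℝ E} {R : Finset E} {ζ : ι}

theorem inner_nonneg_of_repr_eq_one
    (hrefl : ∀ a ∈ R, ∀ β ∈ R, β - (2 * ⟪β, a⟫ / ⟪a, a⟫) • a ∈ R)
    (hcom : ∀ γ ∈ R, b.repr γ ζ = -1 ∨ b.repr γ ζ = 0 ∨ b.repr γ ζ = 1)
    {u a : E} (hu : u ∈ R) (ha : a ∈ R) (huζ : b.repr u ζ = 1) (haζ : b.repr a ζ = 1) :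
    0 ≤ ⟪u, a⟫ := by
  have ha0 : a ≠ 0 := fun h => by simp [h] at haζ
  have hc : 0 ≤ 2 * ⟪u, a⟫ / ⟪a, a⟫ := by
    have h := hcom _ (hrefl a ha u hu)
    simp only [map_sub, map_smul, Finsupp.sub_apply, Finsupp.smul_apply, huζ, haζ,
      smul_eq_mul, mul_one] at h
    rcases h with h | h | h <;> linarith
  have := (div_nonneg_iff.1 hc).resolve_right fun h => (real_inner_self_pos.2 ha0).not_ge h.2
  linarith [this.1]

theorem inner_eq_repr_mul_of_fundamentalWeight [Fintype ι] [DecidableEq ι] {ϖ : E}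
    (hϖ : ∀ k : ι, 2 * ⟪ϖ, b k⟫ / ⟪b k, b k⟫ = if k = ζ then 1 else 0) (x : E) :
    ⟪ϖ, x⟫ = b.repr x ζ * (⟪b ζ, b ζ⟫ / 2) := by
  have hsimple : ∀ k, ⟪b k, ϖ⟫ = if k = ζ then ⟪b ζ, b ζ⟫ / 2 else 0 := by
    intro k
    have hk := hϖ k
    rw [real_inner_comm]
    split_ifs at hk ⊢ with h
    · subst h
      rw [div_eq_one_iff_eq (real_inner_self_pos.2 (b.ne_zero k)).ne'] at hk
      linarith
    · simpa [b.ne_zero k] using hk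
  rw [real_inner_comm, b.inner_eq_sum_repr_mul x]
  simp [hsimple]

theorem reflectionsProd_fundamentalWeight [Fintype ι] [DecidableEq ι] {ϖ : E}
    (hϖ : ∀ k : ι, 2 * ⟪ϖ, b k⟫ / ⟪b k, b k⟫ = if k = ζ then 1 else 0) {α : ℕ → E} {q : ℕ}
    (horth : ∀ i j, i < j → j < q → ⟪α i, α j⟫ = 0) (hαζ : ∀ j < q, b.repr (α j) ζ = 1)
    (hlong : ∀ j < q, ⟪α j, α j⟫ = ⟪b ζ, b ζ⟫) :
    reflectionsProd α q ϖ = ϖ - ∑ j ∈ range q, α j := by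
  rw [reflectionsProd_apply horth]
  refine congrArg _ (sum_congr rfl fun j hj => ?_)
  have hj := mem_range.1 hj
  have hL := (real_inner_self_pos.2 (b.ne_zero ζ)).ne'
  rw [inner_eq_repr_mul_of_fundamentalWeight hϖ, hαζ j hj, hlong j hj]
  field_simp
  exact one_smul ℝ (α j)

end Cominuscule

theorem repr_reflectionsProd_simple_nonpos {ι E : Type*} [NormedAddCommGroup E]
    [InnerProductSpace ℝ E] {b : Module.Basis ι ℝ E} {R : Finset E} {ζ : ι} {α : ℕ → E} {q : ℕ}
    (hrefl : ∀ a ∈ R, ∀ β ∈ R, β - (2 * ⟪β, a⟫ / ⟪a, a⟫) • a ∈ R)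
    (hcom : ∀ γ ∈ R, b.repr γ ζ = -1 ∨ b.repr γ ζ = 0 ∨ b.repr γ ζ = 1)
    (hαR : ∀ j < q, α j ∈ R) (hαζ : ∀ j < q, b.repr (α j) ζ = 1)
    (horth : ∀ i j, i < j → j < q → ⟪α i, α j⟫ = 0) {k : ι} (hbk : b k ∈ R)
    (hfirst : ∀ j₀ < q, (∀ j < j₀, ⟪b k, α j⟫ = 0) → 0 ≤ ⟪b k, α j₀⟫)
    (hq : 0 < q) (hterm : ⟪α (q - 1), b ζ⟫ ≠ 0) :
    b.repr (reflectionsProd α q (b k)) ζ ≤ 0 := by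
  have hW := reflectionsProd_mem hrefl hαR hbk
  rcases hcom _ hW with h | h | h
  · linarith
  · exact h.le
  exfalso
  have hnonpos : ∀ j < q, ⟪b k, α j⟫ ≤ 0 := fun j hj => by
    have hα0 : α j ≠ 0 := fun h0 => by simpa [h0] using hαζ j hj
    have := inner_nonneg_of_repr_eq_one hrefl hcom hW (hαR j hj) h (hαζ j hj)
    rw [inner_reflectionsProd_apply_eq_neg horth hj hα0] at this
    linarith
  have hzero := eq_zero_of_forall_nonpos_of_first_nonneg hfirst hnonpos
  have hfix : reflectionsProd α q (b k) = b k := by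
    rw [reflectionsProd_apply horth, sub_eq_self]
    exact sum_eq_zero fun j hj => by simp [hzero j (mem_range.1 hj)]
  classical
  rw [hfix, b.repr_self, Finsupp.single_apply] at h
  obtain rfl : k = ζ := by
    by_contra hne
    simp [hne] at h
  exact hterm (by rw [real_inner_comm]; exact hzero _ (by omega))

theorem stmt6_general {ι E : Type*} [Fintype ι] [DecidableEq ι] [NormedAddCommGroup E] [InnerProductSpace ℝ E]
    (b : Module.Basis ι ℝ E) (R : Finset E)
    (hrefl : ∀ α ∈ R, ∀ β ∈ R, β - (2 * ⟪β, α⟫ / ⟪α, α⟫) • α ∈ R)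
    (hsimple : ∀ k : ι, b k ∈ R)
    (ζ : ι) (hζlong : ∀ β ∈ R, ‖β‖ ≤ ‖b ζ‖)
    (q : ℕ) (α : ℕ → E) (Pi' : ℕ → Set ι)
    (hPi0 : Pi' 0 = Set.univ)
    (hζmem : ∀ i < q, ζ ∈ Pi' i)
    (hhigh : ∀ i < q, α i ∈ R ∧ (↑(b.repr (α i)).support : Set ι) ⊆ Pi' i ∧
      ∀ γ ∈ R, (↑(b.repr γ).support : Set ι) ⊆ Pi' i → ∀ k, b.repr γ k ≤ b.repr (α i) k)
    (hstep : ∀ i, i + 1 < q → Pi' (i + 1) =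
      {k : ι | (k ∈ Pi' i ∧ ⟪α i, b k⟫ = 0) ∧
        Relation.ReflTransGen
          (fun a c => (a ∈ Pi' i ∧ ⟪α i, b a⟫ = 0) ∧ (c ∈ Pi' i ∧ ⟪α i, b c⟫ = 0) ∧
            ⟪b a, b c⟫ ≠ 0)
          ζ k})
    (hcom : ∀ γ ∈ R, b.repr γ ζ = -1 ∨ b.repr γ ζ = 0 ∨ b.repr γ ζ = 1)
    (ϖ : E) (hϖ : ∀ k : ι, 2 * ⟪ϖ, b k⟫ / ⟪b k, b k⟫ = if k = ζ then 1 else 0)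
    (hq : 0 < q) (hterm : ⟪α (q - 1), b ζ⟫ ≠ 0) :
    (∀ k : ι, 2 * ⟪ϖ - ∑ j ∈ Finset.range q, α j, b k⟫ / ⟪b k, b k⟫ ≤ 0) ∧
    (∃ w : E ≃ₗᵢ[ℝ] E, (∀ β ∈ R, w β ∈ R) ∧ w ϖ = ϖ - ∑ j ∈ Finset.range q, α j) := by
  have hhigh : ∀ j < q, IsHighestRootOn b R (Pi' j) (α j) := hhigh
  have hαR : ∀ j < q, α j ∈ R := fun j hj => (hhigh j hj).1
  have hsupp : ∀ j < q, ↑(b.repr (α j)).support ⊆ Pi' j := fun j hj => (hhigh j hj).2.1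
  have hαζ : ∀ j < q, b.repr (α j) ζ = 1 := fun j hj => by
    have := (hhigh j hj).one_le_repr_of_mem (hsimple ζ) (hζmem j hj)
    rcases hcom _ (hαR j hj) with h | h | h <;> linarith
  have hlong : ∀ j < q, ⟪α j, α j⟫ = ⟪b ζ, b ζ⟫ := fun j hj => by
    simp only [real_inner_self_eq_norm_sq,
      (hhigh j hj).norm_eq_of_mem hrefl hsimple hζlong (hζmem j hj)]
  have horth : ∀ i j, i < j → j < q → ⟪α i, α j⟫ = 0 :=
    fun _ _ => inner_cascade_eq_zero hstep hsupp
  have hWϖ := reflectionsProd_fundamentalWeight hϖ horth hαζ hlong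
  refine ⟨fun k => ?_, _, fun β hβ => reflectionsProd_mem hrefl hαR hβ, hWϖ⟩
  have hfirst : ∀ j₀ < q, (∀ j < j₀, ⟪b k, α j⟫ = 0) → 0 ≤ ⟪b k, α j₀⟫ :=
    fun _ => inner_simple_cascade_nonneg_of_first hPi0 hstep hsupp
      fun j hj k hk => (hhigh j hj).inner_nonneg_of_mem hrefl (hsimple k) hk
  rw [← hWϖ, inner_reflectionsProd_left horth, inner_eq_repr_mul_of_fundamentalWeight hϖ]
  have hrepr :=
    repr_reflectionsProd_simple_nonpos hrefl hcom hαR hαζ horth (hsimple k) hfirst hq hterm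
  have hL : 0 ≤ ⟪b ζ, b ζ⟫ / 2 := div_nonneg real_inner_self_nonneg zero_le_two
  exact div_nonpos_of_nonpos_of_nonneg
    (mul_nonpos_of_nonneg_of_nonpos zero_le_two (mul_nonpos_of_nonpos_of_nonneg hrepr hL))
    real_inner_self_nonneg

/-- Let `(α₁, ..., α_p)` be the maximal dominant orthogonal sequence for the
cominuscule fundamental weight `ϖ` of a simple complex Lie algebra of Hermitian type,
produced by the cascade algorithm (setup as in STATEMENT 6, plus the cominuscule condition
and the termination condition `⟨α_p^∨, ζ⟩ ≠ 0`).  Then `μ₀ = ϖ - α₁ - ⋯ - α_p` is the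
lowest weight of the irreducible module with highest weight `ϖ`: it is antidominant
(`⟨μ₀, β^∨⟩ ≤ 0` for every simple root `β`) and it lies in the Weyl orbit of `ϖ`. -/
theorem stmt6 {ι E : Type*} [Fintype ι] [DecidableEq ι] [NormedAddCommGroup E] [InnerProductSpace ℝ E]
    (b : Module.Basis ι ℝ E) (R : Finset E)
    (s : ℝ) (hs : 0 < s)
    (hR0 : ∀ α ∈ R, α ≠ 0)
    (hlen : ∀ α ∈ R, ‖α‖ = s ∨ ‖α‖ = Real.sqrt 2 * s)
    (hintR : ∀ α ∈ R, ∀ β ∈ R, ∃ z : ℤ, 2 * ⟪β, α⟫ / ⟪α, α⟫ = (z : ℝ))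
    (hrefl : ∀ α ∈ R, ∀ β ∈ R, β - (2 * ⟪β, α⟫ / ⟪α, α⟫) • α ∈ R)
    (hsimple : ∀ k : ι, b k ∈ R)
    (hsign : ∀ γ ∈ R, (∀ k, 0 ≤ b.repr γ k) ∨ (∀ k, b.repr γ k ≤ 0))
    (ζ : ι) (hζlong : ∀ β ∈ R, ‖β‖ ≤ ‖b ζ‖)
    (q : ℕ) (α : ℕ → E) (Pi' : ℕ → Set ι)
    (hPi0 : Pi' 0 = Set.univ)
    (hζmem : ∀ i < q, ζ ∈ Pi' i)
    (hhigh : ∀ i < q, α i ∈ R ∧ (↑(b.repr (α i)).support : Set ι) ⊆ Pi' i ∧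
      ∀ γ ∈ R, (↑(b.repr γ).support : Set ι) ⊆ Pi' i → ∀ k, b.repr γ k ≤ b.repr (α i) k)
    (hstep : ∀ i, i + 1 < q → Pi' (i + 1) =
      {k : ι | (k ∈ Pi' i ∧ ⟪α i, b k⟫ = 0) ∧
        Relation.ReflTransGen
          (fun a c => (a ∈ Pi' i ∧ ⟪α i, b a⟫ = 0) ∧ (c ∈ Pi' i ∧ ⟪α i, b c⟫ = 0) ∧
            ⟪b a, b c⟫ ≠ 0)
          ζ k})
    (hcom : ∀ γ ∈ R, b.repr γ ζ = -1 ∨ b.repr γ ζ = 0 ∨ b.repr γ ζ = 1)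
    (ϖ : E) (hϖ : ∀ k : ι, 2 * ⟪ϖ, b k⟫ / ⟪b k, b k⟫ = if k = ζ then 1 else 0)
    (hq : 0 < q) (hterm : ⟪α (q - 1), b ζ⟫ ≠ 0) :
    (∀ k : ι, 2 * ⟪ϖ - ∑ j ∈ Finset.range q, α j, b k⟫ / ⟪b k, b k⟫ ≤ 0) ∧
    (∃ w : E ≃ₗᵢ[ℝ] E, (∀ β ∈ R, w β ∈ R) ∧ w ϖ = ϖ - ∑ j ∈ Finset.range q, α j) :=
  stmt6_general b R hrefl hsimple ζ hζlong q α Pi' hPi0 hζmem hhigh hstep hcom ϖ hϖ hq hterm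
end
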